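/- For integers λ ≥ 0 and 0 ≤ μ ≤ λ, define v_{±μ} = (±z₁ + i z₂)^μ · z₃^{λ−μ} in C[z₁,z₂,z₃]_λ. Then the 2λ+1 classes of v_μ (for −λ ≤ μ ≤ λ) modulo (z₁²+z₂²+z₃²)·C[z₁,z₂,z₃]_{λ−2} form a basis of the quotient space. -/

import Mathlib

/-!
In the isotropic coordinates `u = z₁ + i z₂`, `w = -z₁ + i z₂` one has `u w = z₃² - q` with
`q = z₁² + z₂² + z₃²`. The substitution `(z₁, z₂, z₃) ↦ (u, w, z₃)` is invertible and preserves
degrees, so the products `u^a w^b z₃^r` with `a + b + r = λ` span `ℂ[z]_λ`; modulo `q ℂ[z]_{λ-2}`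
each factor `u w` may be replaced by `z₃²`, which turns `u^a w^b z₃^r` into `v_{a-b}`.
For independence, evaluate on the parametrisation `((s² - 1)/2, -i(s² + 1)/2, s)` of the cone
`q = 0`: there `q ℂ[z]` vanishes and `v_μ` becomes `s^{λ+μ}`, and distinct powers of `s` are
linearly independent.
-/

open MvPolynomial

/-- The quadratic form `z₁² + z₂² + z₃²` as a polynomial in three variables. -/
noncomputable def qpoly : MvPolynomial (Fin 3) ℂ := X 0 ^ 2 + X 1 ^ 2 + X 2 ^ 2

/-- The subspace `(z₁²+z₂²+z₃²) · ℂ[z₁,z₂,z₃]_{λ−2}`, taken to be `0` when `λ < 2`. -/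
noncomputable def harmSub (lam : ℕ) : Submodule ℂ (MvPolynomial (Fin 3) ℂ) :=
  if 2 ≤ lam then
    (homogeneousSubmodule (Fin 3) ℂ (lam - 2)).map (LinearMap.mulLeft ℂ qpoly)
  else ⊥

/-- The element `v_μ = (±z₁ + i z₂)^{|μ|} · z₃^{λ−|μ|}` (sign that of `μ`). -/
noncomputable def vmu (lam : ℕ) (μ : ℤ) : MvPolynomial (Fin 3) ℂ :=
  ((if 0 ≤ μ then (1 : ℂ) else -1) • X 0 + Complex.I • X 1) ^ μ.natAbs *
    X 2 ^ (lam - μ.natAbs)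

noncomputable def zPlus : MvPolynomial (Fin 3) ℂ := (1 : ℂ) • X 0 + Complex.I • X 1

noncomputable def zMinus : MvPolynomial (Fin 3) ℂ := (-1 : ℂ) • X 0 + Complex.I • X 1

lemma vmu_of_nonneg (lam : ℕ) {μ : ℤ} (hμ : 0 ≤ μ) :
    vmu lam μ = zPlus ^ μ.natAbs * X 2 ^ (lam - μ.natAbs) := by
  rw [vmu, if_pos hμ, zPlus]

lemma vmu_of_neg (lam : ℕ) {μ : ℤ} (hμ : μ < 0) :
    vmu lam μ = zMinus ^ μ.natAbs * X 2 ^ (lam - μ.natAbs) := by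
  rw [vmu, if_neg hμ.not_ge, zMinus]

lemma zPlus_mul_zMinus : zPlus * zMinus = X 2 ^ 2 - qpoly := by
  have hI : (C Complex.I : MvPolynomial (Fin 3) ℂ) ^ 2 = -1 := by
    rw [← C_pow, Complex.I_sq, map_neg, map_one]
  simp only [zPlus, zMinus, qpoly, smul_eq_C_mul, map_one, map_neg, one_mul]
  linear_combination (X 1 : MvPolynomial (Fin 3) ℂ) ^ 2 * hI

lemma isHomogeneous_smul_X_add_smul_X {σ R : Type*} [CommSemiring R] (a b : R) (i j : σ) :
    (a • X i + b • X j : MvPolynomial σ R).IsHomogeneous 1 :=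
  add_mem (Submodule.smul_mem (homogeneousSubmodule σ R 1) a (isHomogeneous_X R i))
    (Submodule.smul_mem _ b (isHomogeneous_X R j))

lemma isHomogeneous_zPlus : zPlus.IsHomogeneous 1 := isHomogeneous_smul_X_add_smul_X _ _ _ _

lemma isHomogeneous_zMinus : zMinus.IsHomogeneous 1 := isHomogeneous_smul_X_add_smul_X _ _ _ _

noncomputable def nullMonomial (a b r : ℕ) : MvPolynomial (Fin 3) ℂ :=
  zPlus ^ a * zMinus ^ b * X 2 ^ r

lemma isHomogeneous_nullMonomial (a b r : ℕ) : (nullMonomial a b r).IsHomogeneous (a + b + r) := by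
  simpa [nullMonomial] using ((isHomogeneous_zPlus.pow a).mul (isHomogeneous_zMinus.pow b)).mul
    ((isHomogeneous_X ℂ (2 : Fin 3)).pow r)

lemma qpoly_mul_mem_harmSub {n : ℕ} {P : MvPolynomial (Fin 3) ℂ} (hP : P.IsHomogeneous n) :
    qpoly * P ∈ harmSub (n + 2) := by
  rw [harmSub, if_pos le_add_self, Nat.add_sub_cancel]
  exact ⟨P, hP, rfl⟩

lemma nullMonomial_sub_vmu_mem_harmSub {lam a b r : ℕ} (h : a + b + r = lam) :
    nullMonomial a b r - vmu lam (a - b) ∈ harmSub lam := by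
  induction b generalizing a r with
  | zero =>
    rw [vmu_of_nonneg _ (by omega), show ((a : ℤ) - (0 : ℕ)).natAbs = a by omega,
      show lam - a = r by omega]
    simp [nullMonomial]
  | succ b ih =>
    cases a with
    | zero =>
      rw [vmu_of_neg _ (by omega), show ((0 : ℕ) - ((b + 1 : ℕ) : ℤ)).natAbs = b + 1 by omega,
        show lam - (b + 1) = r by omega]
      simp [nullMonomial]
    | succ a =>
      obtain rfl : lam = a + b + r + 2 := by omega
      have hred : nullMonomial (a + 1) (b + 1) r - vmu (a + b + r + 2) ((a + 1 : ℕ) - (b + 1 : ℕ))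
          = (nullMonomial a b (r + 2) - vmu (a + b + r + 2) (a - b))
            - qpoly * nullMonomial a b r := by
        rw [show ((a + 1 : ℕ) : ℤ) - (b + 1 : ℕ) = a - b by push_cast; ring]
        simp only [nullMonomial]
        linear_combination (zPlus ^ a * zMinus ^ b * X 2 ^ r) * zPlus_mul_zMinus
      rw [hred]
      exact sub_mem (ih (by omega)) (qpoly_mul_mem_harmSub (isHomogeneous_nullMonomial a b r))

noncomputable def nullSubst : MvPolynomial (Fin 3) ℂ →ₐ[ℂ] MvPolynomial (Fin 3) ℂ :=
  aeval ![zPlus, zMinus, X 2]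

lemma zPlus_sub_zMinus : zPlus - zMinus = (2 : ℂ) • X 0 := by
  rw [zPlus, zMinus]; module

lemma zPlus_add_zMinus : zPlus + zMinus = (2 * Complex.I) • X 1 := by
  rw [zPlus, zMinus]; module

noncomputable def nullSubstInv : MvPolynomial (Fin 3) ℂ →ₐ[ℂ] MvPolynomial (Fin 3) ℂ :=
  aeval ![(2 : ℂ)⁻¹ • (X 0 - X 1), (2 * Complex.I)⁻¹ • (X 0 + X 1), X 2]

lemma nullSubst_X_zero : nullSubst (X 0) = zPlus := aeval_X _ _

lemma nullSubst_X_one : nullSubst (X 1) = zMinus := aeval_X _ _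

lemma nullSubst_X_two : nullSubst (X 2) = X 2 := aeval_X _ _

lemma nullSubstInv_X_zero : nullSubstInv (X 0) = (2 : ℂ)⁻¹ • (X 0 - X 1) := aeval_X _ _

lemma nullSubstInv_X_one : nullSubstInv (X 1) = (2 * Complex.I)⁻¹ • (X 0 + X 1) := aeval_X _ _

lemma nullSubstInv_X_two : nullSubstInv (X 2) = X 2 := aeval_X _ _

lemma nullSubst_nullSubstInv (P : MvPolynomial (Fin 3) ℂ) : nullSubst (nullSubstInv P) = P := by
  have hcomp : nullSubst.comp nullSubstInv = AlgHom.id ℂ _ := by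
    refine algHom_ext fun i => ?_
    rw [AlgHom.comp_apply, AlgHom.id_apply]
    match i with
    | 0 =>
      rw [nullSubstInv_X_zero, map_smul, map_sub, nullSubst_X_zero, nullSubst_X_one,
        zPlus_sub_zMinus, smul_smul, inv_mul_cancel₀ two_ne_zero, one_smul]
    | 1 =>
      rw [nullSubstInv_X_one, map_smul, map_add, nullSubst_X_zero, nullSubst_X_one,
        zPlus_add_zMinus, smul_smul, inv_mul_cancel₀ (by simp), one_smul]
    | 2 => rw [nullSubstInv_X_two, nullSubst_X_two]
  exact AlgHom.congr_fun hcomp P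

lemma isHomogeneous_nullSubstInv {n : ℕ} {P : MvPolynomial (Fin 3) ℂ} (hP : P.IsHomogeneous n) :
    (nullSubstInv P).IsHomogeneous n := by
  rw [nullSubstInv, ← one_mul n]
  refine hP.aeval _ fun i => ?_
  fin_cases i
  · exact Submodule.smul_mem (homogeneousSubmodule (Fin 3) ℂ 1) _
      (sub_mem (isHomogeneous_X ℂ 0) (isHomogeneous_X ℂ 1))
  · exact Submodule.smul_mem (homogeneousSubmodule (Fin 3) ℂ 1) _
      (add_mem (isHomogeneous_X ℂ 0) (isHomogeneous_X ℂ 1))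
  · exact isHomogeneous_X ℂ 2

lemma nullSubst_monomial (d : Fin 3 →₀ ℕ) (c : ℂ) :
    nullSubst (monomial d c) = c • nullMonomial (d 0) (d 1) (d 2) := by
  rw [nullSubst, aeval_monomial, Finsupp.prod_fintype _ _ (by simp), Fin.prod_univ_three,
    ← Algebra.smul_def]
  simp [nullMonomial]

lemma homogeneousSubmodule_le_harmSub_sup_span_vmu (lam : ℕ) :
    homogeneousSubmodule (Fin 3) ℂ lam ≤
      harmSub lam ⊔ Submodule.span ℂ (vmu lam '' Finset.Icc (-(lam : ℤ)) lam) := by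
  intro P hP
  have hQ := isHomogeneous_nullSubstInv hP
  rw [← nullSubst_nullSubstInv P, ← support_sum_monomial_coeff (nullSubstInv P), map_sum]
  refine Submodule.sum_mem _ fun d hd => ?_
  have hdeg : d 0 + d 1 + d 2 = lam := by
    simpa [Finsupp.weight_apply, Finsupp.sum_fintype, Fin.sum_univ_three] using
      hQ (mem_support_iff.1 hd)
  rw [nullSubst_monomial, ← sub_add_cancel (nullMonomial _ _ _) (vmu lam (d 0 - d 1))]
  refine Submodule.smul_mem _ _ (Submodule.add_mem_sup
    (nullMonomial_sub_vmu_mem_harmSub hdeg) (Submodule.subset_span ?_))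
  exact ⟨_, by simp; omega, rfl⟩

lemma eq_zero_of_forall_sum_mul_pow_eq_zero {R ι : Type*} [CommRing R] [IsDomain R] [Infinite R]
    {s : Finset ι} {e : ι → ℕ} (he : Set.InjOn e s) {c : ι → R}
    (h : ∀ x : R, ∑ i ∈ s, c i * x ^ e i = 0) : ∀ i ∈ s, c i = 0 := by
  have hp : ∑ i ∈ s, Polynomial.C (c i) * Polynomial.X ^ e i = 0 :=
    Polynomial.funext fun x => by simpa [Polynomial.eval_finsetSum] using h x
  intro i hi
  have hcoeff := congrArg (Polynomial.coeff · (e i)) hp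
  simp only [Polynomial.finsetSum_coeff, Polynomial.coeff_C_mul_X_pow,
    Polynomial.coeff_zero] at hcoeff
  rwa [Finset.sum_eq_single i (fun j hj hji => if_neg fun hij => hji (he hj hi hij.symm))
    (absurd hi), if_pos rfl] at hcoeff

noncomputable def nullPoint (s : ℂ) : Fin 3 → ℂ :=
  ![(s ^ 2 - 1) / 2, -(Complex.I / 2) * (s ^ 2 + 1), s]

lemma eval_nullPoint_qpoly (s : ℂ) : eval (nullPoint s) qpoly = 0 := by
  simp only [qpoly, nullPoint, map_add, map_pow, eval_X, Matrix.cons_val_zero,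
    Matrix.cons_val_one, Matrix.cons_val_two, Matrix.head_cons, Matrix.tail_cons]
  linear_combination ((s ^ 2 + 1) ^ 2 / 4) * Complex.I_sq

lemma eval_nullPoint_of_mem_harmSub {lam : ℕ} (s : ℂ) {P : MvPolynomial (Fin 3) ℂ}
    (hP : P ∈ harmSub lam) : eval (nullPoint s) P = 0 := by
  unfold harmSub at hP
  split_ifs at hP
  · obtain ⟨Q, -, rfl⟩ := hP
    rw [LinearMap.mulLeft_apply, map_mul, eval_nullPoint_qpoly, zero_mul]
  · rw [(Submodule.mem_bot ℂ).1 hP, map_zero]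

lemma eval_nullPoint_zPlus (s : ℂ) : eval (nullPoint s) zPlus = s ^ 2 := by
  simp only [zPlus, nullPoint, smul_eq_C_mul, map_add, map_mul, eval_C, eval_X,
    Matrix.cons_val_zero, Matrix.cons_val_one]
  linear_combination (-(s ^ 2 + 1) / 2) * Complex.I_sq

lemma eval_nullPoint_zMinus (s : ℂ) : eval (nullPoint s) zMinus = 1 := by
  simp only [zMinus, nullPoint, smul_eq_C_mul, map_add, map_mul, eval_C, eval_X,
    Matrix.cons_val_zero, Matrix.cons_val_one]
  linear_combination (-(s ^ 2 + 1) / 2) * Complex.I_sq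

lemma eval_nullPoint_X_two (s : ℂ) : eval (nullPoint s) (X 2) = s := eval_X _

lemma eval_nullPoint_vmu {lam : ℕ} {μ : ℤ} (hμ : μ ∈ Finset.Icc (-(lam : ℤ)) lam) (s : ℂ) :
    eval (nullPoint s) (vmu lam μ) = s ^ ((lam : ℤ) + μ).toNat := by
  rw [Finset.mem_Icc] at hμ
  rcases le_or_gt 0 μ with hμ0 | hμ0
  · rw [vmu_of_nonneg _ hμ0, map_mul, map_pow, map_pow, eval_nullPoint_zPlus,
      eval_nullPoint_X_two, ← pow_mul, ← pow_add]
    congr 1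
    omega
  · rw [vmu_of_neg _ hμ0, map_mul, map_pow, map_pow, eval_nullPoint_zMinus,
      eval_nullPoint_X_two, one_pow, one_mul]
    congr 1
    omega

/-- The `2λ+1` classes of `v_μ` (`−λ ≤ μ ≤ λ`) modulo
`(z₁²+z₂²+z₃²)·ℂ[z₁,z₂,z₃]_{λ−2}` form a basis of the quotient of
`ℂ[z₁,z₂,z₃]_λ`: they span it and are linearly independent modulo the subspace. -/
theorem vmu_basis_of_quotient (lam : ℕ) :
    (∀ P ∈ homogeneousSubmodule (Fin 3) ℂ lam, ∃ c : ℤ → ℂ,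
        P - ∑ μ ∈ Finset.Icc (-(lam : ℤ)) (lam : ℤ), c μ • vmu lam μ ∈ harmSub lam) ∧
    (∀ c : ℤ → ℂ,
        (∑ μ ∈ Finset.Icc (-(lam : ℤ)) (lam : ℤ), c μ • vmu lam μ) ∈ harmSub lam →
        ∀ μ ∈ Finset.Icc (-(lam : ℤ)) (lam : ℤ), c μ = 0) := by
  refine ⟨fun P hP => ?_, fun c hc => ?_⟩
  · obtain ⟨Q, hQ, V, hV, rfl⟩ :=
      Submodule.mem_sup.1 (homogeneousSubmodule_le_harmSub_sup_span_vmu lam hP)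
    obtain ⟨c, rfl⟩ := (Submodule.mem_span_image_finset_iff_exists_fun' ℂ).1 hV
    exact ⟨c, by rwa [add_sub_cancel_right]⟩
  · have hinj : Set.InjOn (fun μ : ℤ => ((lam : ℤ) + μ).toNat) (Finset.Icc (-(lam : ℤ)) lam) := by
      intro μ hμ ν hν h
      simp only [Finset.coe_Icc, Set.mem_Icc] at hμ hν h
      omega
    refine eq_zero_of_forall_sum_mul_pow_eq_zero hinj fun s => ?_
    rw [← eval_nullPoint_of_mem_harmSub s hc, map_sum]
    refine Finset.sum_congr rfl fun μ hμ => ?_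
    rw [smul_eval, eval_nullPoint_vmu hμ]
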